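/- For all sufficiently large L, and for all sufficiently large t (depending on L), one has Q(s) > 0 and B₀(s) > 0 for all s ∈ [0, t̃−ℓ]; moreover lim_{L→∞} limsup_{t→∞} ∫_0^{t̃−ℓ} Q(s)^{−2} ds = 0 and lim_{L→∞} limsup_{t→∞} ∫_0^{t̃−ℓ} B₀(s)^{−2} ds = 0. Consequently exp( ((α_d − α_d²)/2) · ∫_0^{t̃−ℓ} Q(s)^{−2} ds ) → 1 and exp( ((α_d − α_d²)/2) · ∫_0^{t̃−ℓ} B₀(s)^{−2} ds ) → 1 in the same iterated limit (t → ∞ followed by L → ∞). -/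

import Mathlib

open MeasureTheory ProbabilityTheory Filter Set

noncomputable section

/-- `α_d = (d-1)/2`. -/
def alphaD (d : ℕ) : ℝ := ((d : ℝ) - 1) / 2

/-- `𝔠_d = (d-4)/(2√2)`. -/
def cD (d : ℕ) : ℝ := ((d : ℝ) - 4) / (2 * Real.sqrt 2)

/-- `m_t = √2·t + 𝔠_d·log t`. -/
def mT (d : ℕ) (t : ℝ) : ℝ := Real.sqrt 2 * t + cD d * Real.log t

/-- `𝐱(z) = √2·L - z`. -/
def xZ (L z : ℝ) : ℝ := Real.sqrt 2 * L - z

/-- `𝐲(w) = (m_t/t)·(t - ℓ) + y - w`, where `ℓ = ℓ(L)`. -/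
def yW (d : ℕ) (y : ℝ) (lf : ℝ → ℝ) (t L w : ℝ) : ℝ := mT d t / t * (t - lf L) + y - w

/-- The upper barrier `B₀(s) = (m_t/t)(s+L) + y + log ℓ + 𝒦·max(log(min(s, t̃-ℓ-s)), 0)`,
where `ℓ = ℓ(L)` and `t̃ = t - L`. -/
def Bzero (d : ℕ) (y K : ℝ) (lf : ℝ → ℝ) (t L s : ℝ) : ℝ :=
  mT d t / t * (s + L) + y + Real.log (lf L) +
    K * max (Real.log (min s (t - L - lf L - s))) 0

/-- The lower barrier `Q`: equal to `√2·L - 2L^{2/3}` on `[0, ℓ₁]`, to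
`𝐲(2ℓ^{2/3})` on `[t̃-ℓ-ℓ₁, t̃-ℓ]`, and in between to the straight line joining
these two values on `[0, t̃-ℓ]` lowered by `(min(s, t̃-ℓ-s))^{2/3}`,
where `ℓ = ℓ(L)`, `ℓ₁ = ℓ^{1/4}` and `t̃ = t - L`. -/
def Qbar (d : ℕ) (y : ℝ) (lf : ℝ → ℝ) (t L s : ℝ) : ℝ :=
  if s ≤ lf L ^ ((1 : ℝ) / 4) then Real.sqrt 2 * L - 2 * L ^ ((2 : ℝ) / 3)
  else if s < t - L - lf L - lf L ^ ((1 : ℝ) / 4) then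
    Real.sqrt 2 * L - 2 * L ^ ((2 : ℝ) / 3) +
      (yW d y lf t L (2 * lf L ^ ((2 : ℝ) / 3)) -
        (Real.sqrt 2 * L - 2 * L ^ ((2 : ℝ) / 3))) * s / (t - L - lf L) -
      min s (t - L - lf L - s) ^ ((2 : ℝ) / 3)
  else yW d y lf t L (2 * lf L ^ ((2 : ℝ) / 3))

lemma sqrt_two_ge : (141/100 : ℝ) ≤ Real.sqrt 2 := by
  nlinarith [Real.sq_sqrt (by norm_num : (0:ℝ) ≤ 2), Real.sqrt_nonneg 2]

lemma sqrt_two_le : Real.sqrt 2 ≤ 2 := by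
  nlinarith [Real.sq_sqrt (by norm_num : (0:ℝ) ≤ 2), Real.sqrt_nonneg 2]

lemma mT_div_ev (d : ℕ) : ∀ᶠ t : ℝ in atTop, (7/5 : ℝ) ≤ mT d t / t := by
  have hlog : Tendsto (fun t : ℝ => Real.log t / t) atTop (nhds 0) :=
    Real.isLittleO_log_id_atTop.tendsto_div_nhds_zero
  have h2 : Tendsto (fun t : ℝ => cD d * (Real.log t / t)) atTop (nhds 0) := by
    simpa using hlog.const_mul (cD d)
  have hball := h2.eventually (Metric.ball_mem_nhds (0:ℝ) (by norm_num : (0:ℝ) < 1/100))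
  filter_upwards [hball, eventually_gt_atTop (0:ℝ)] with t hb ht
  have hb' : |cD d * (Real.log t / t)| < 1/100 := by
    rw [Real.dist_eq, sub_zero] at hb
    exact hb
  have heq : mT d t / t = Real.sqrt 2 + cD d * (Real.log t / t) := by
    field_simp [mT]
    rw [mT]; ring
  rw [heq]
  have := (abs_lt.mp hb').1
  linarith [sqrt_two_ge]

lemma rpow_two_thirds_le {x : ℝ} (hx : 64 ≤ x) : x ^ ((2:ℝ)/3) ≤ x / 4 := by
  have hx0 : (0:ℝ) < x := by linarith
  have h64 : (64:ℝ) ^ ((1:ℝ)/3) = 4 := by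
    rw [show (64:ℝ) = 4 ^ (3:ℕ) by norm_num, ← Real.rpow_natCast 4 3,
      ← Real.rpow_mul (by norm_num : (0:ℝ) ≤ 4)]
    norm_num
  have h4 : (4:ℝ) ≤ x ^ ((1:ℝ)/3) := by
    rw [← h64]; exact Real.rpow_le_rpow (by norm_num) hx (by norm_num)
  have key : x ^ ((2:ℝ)/3) * x ^ ((1:ℝ)/3) = x := by
    rw [← Real.rpow_add hx0]; norm_num
  nlinarith [Real.rpow_nonneg hx0.le ((2:ℝ)/3),
    mul_nonneg (Real.rpow_nonneg hx0.le ((2:ℝ)/3)) (sub_nonneg.mpr h4)]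

lemma integral_inv_sq_le (f : ℝ → ℝ) (b c : ℝ) (hb : 0 ≤ b) (hc : 0 < c)
    (hf : ∀ s ∈ Icc (0:ℝ) b, s + c ≤ f s) :
    ∫ s in Icc (0:ℝ) b, ((f s)^2)⁻¹ ≤ 1/c := by
  have hgc : ContinuousOn (fun s : ℝ => ((s + c)^2)⁻¹) (Icc 0 b) := by
    apply ContinuousOn.inv₀
    · fun_prop
    · intro x hx
      have : 0 < x + c := by have := hx.1; linarith
      positivity
  have hg : IntegrableOn (fun s : ℝ => ((s + c)^2)⁻¹) (Icc 0 b) := hgc.integrableOn_Icc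
  have hmono : (∫ s in Icc (0:ℝ) b, ((f s)^2)⁻¹) ≤ ∫ s in Icc (0:ℝ) b, ((s + c)^2)⁻¹ := by
    apply integral_mono_of_nonneg
    · exact Eventually.of_forall fun s => by positivity
    · exact hg
    · filter_upwards [ae_restrict_mem measurableSet_Icc] with s hs
      have h1 : 0 < s + c := by have := hs.1; linarith
      have h2 : s + c ≤ f s := hf s hs
      exact inv_anti₀ (by positivity) (by nlinarith)
  have hval : (∫ s in Icc (0:ℝ) b, ((s + c)^2)⁻¹) = c⁻¹ - (b + c)⁻¹ := by
    rw [integral_Icc_eq_integral_Ioc, ← intervalIntegral.integral_of_le hb]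
    have hderiv : ∀ x ∈ uIcc (0:ℝ) b,
        HasDerivAt (fun s : ℝ => -(s + c)⁻¹) (((x + c)^2)⁻¹) x := by
      intro x hx
      rw [uIcc_of_le hb] at hx
      have hne : x + c ≠ 0 := by have := hx.1; positivity
      have h := (((hasDerivAt_id x).add_const c).inv hne).neg
      rw [show ((x + c)^2)⁻¹ = -(-1 / (id x + c) ^ 2) by rw [neg_div, neg_neg, one_div]; rfl]
      exact h
    rw [intervalIntegral.integral_eq_sub_of_hasDerivAt hderiv]
    · ring_nf
    · exact (by rwa [uIcc_of_le hb] : IntegrableOn _ (uIcc 0 b) _).intervalIntegrable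
  have h0 : (0:ℝ) ≤ (b + c)⁻¹ := by positivity
  rw [hval] at hmono
  rw [one_div]
  linarith

lemma master (d : ℕ) (y : ℝ) (lf : ℝ → ℝ) (K : ℝ) (hK : 0 ≤ K)
    (L : ℝ) (hL64 : 64 ≤ L) (hLy : 8 * |y| ≤ L)
    (hlf1 : 1 ≤ lf L) (hlf6 : lf L ≤ L ^ ((1:ℝ)/6)) :
    ∃ t₀ : ℝ, ∀ t ≥ t₀, 0 ≤ t - L - lf L ∧
      ∀ s ∈ Icc (0:ℝ) (t - L - lf L),
        s + L/2 ≤ Qbar d y lf t L s ∧ s + L/2 ≤ Bzero d y K lf t L s := by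
  obtain ⟨t₀, ht₀⟩ := eventually_atTop.mp
    ((mT_div_ev d).and (eventually_ge_atTop (L + lf L + 10*(|y| + 2*lf L + 2*L) + 1)))
  refine ⟨t₀, fun t ht => ?_⟩
  obtain ⟨h7, hT⟩ := ht₀ t ht
  have hy : |y| ≥ 0 := abs_nonneg y
  have hyy : -|y| ≤ y := neg_abs_le y
  have hℓ0 : (0:ℝ) ≤ lf L := by linarith
  have hTnn : 0 ≤ t - L - lf L := by linarith
  refine ⟨hTnn, fun s hs => ?_⟩
  obtain ⟨hs0, hsT⟩ := hs
  have h23 : L ^ ((2:ℝ)/3) ≤ L/4 := rpow_two_thirds_le hL64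
  have h23nn : (0:ℝ) ≤ L ^ ((2:ℝ)/3) := Real.rpow_nonneg (by linarith) _
  have hsqL : (7/5:ℝ) * L ≤ Real.sqrt 2 * L :=
    mul_le_mul_of_nonneg_right (by linarith [sqrt_two_ge]) (by linarith)
  have hsqL2 : Real.sqrt 2 * L ≤ 2 * L :=
    mul_le_mul_of_nonneg_right sqrt_two_le (by linarith)
  have hℓ23 : lf L ^ ((2:ℝ)/3) ≤ lf L := by
    have := Real.rpow_le_rpow_of_exponent_le hlf1 (by norm_num : (2:ℝ)/3 ≤ 1)
    rwa [Real.rpow_one] at this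
  have hℓ23nn : (0:ℝ) ≤ lf L ^ ((2:ℝ)/3) := Real.rpow_nonneg hℓ0 _
  have hℓ1L : lf L ^ ((1:ℝ)/4) ≤ L / 4 := by
    calc lf L ^ ((1:ℝ)/4) ≤ (L ^ ((1:ℝ)/6)) ^ ((1:ℝ)/4) :=
          Real.rpow_le_rpow hℓ0 hlf6 (by norm_num)
      _ = L ^ ((1:ℝ)/24) := by
          rw [← Real.rpow_mul (by linarith : (0:ℝ) ≤ L)]; norm_num
      _ ≤ L ^ ((2:ℝ)/3) := Real.rpow_le_rpow_of_exponent_le (by linarith) (by norm_num)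
      _ ≤ L/4 := h23
  have hℓ1one : (1:ℝ) ≤ lf L ^ ((1:ℝ)/4) := by
    calc (1:ℝ) = (1:ℝ) ^ ((1:ℝ)/4) := (Real.one_rpow _).symm
      _ ≤ lf L ^ ((1:ℝ)/4) := Real.rpow_le_rpow zero_le_one hlf1 (by norm_num)
  have hY : (7/5) * (t - lf L) + y - 2 * lf L ^ ((2:ℝ)/3)
      ≤ yW d y lf t L (2 * lf L ^ ((2:ℝ)/3)) := by
    have h1 : (7/5) * (t - lf L) ≤ mT d t / t * (t - lf L) :=
      mul_le_mul_of_nonneg_right h7 (by linarith)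
    simp only [yW]
    linarith
  constructor
  · -- Qbar bound
    simp only [Qbar]
    split_ifs with h1 h2
    · linarith
    · push_neg at h1
      have hs1 : (1:ℝ) ≤ s := le_of_lt (lt_of_le_of_lt hℓ1one h1)
      have hTs : (1:ℝ) ≤ t - L - lf L - s := by
        linarith [lt_of_lt_of_le h2
          (by linarith : t - L - lf L - lf L ^ ((1:ℝ)/4) ≤ t - L - lf L - 1)]
      have hmn : (0:ℝ) ≤ min s (t - L - lf L - s) := le_min (by linarith) (by linarith)
      have hmin23 : min s (t - L - lf L - s) ^ ((2:ℝ)/3) ≤ s ^ ((2:ℝ)/3) :=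
        Real.rpow_le_rpow hmn (min_le_left _ _) (by norm_num)
      have hs23 : s ^ ((2:ℝ)/3) ≤ s/4 + L/4 := by
        rcases le_total s L with h | h
        · have h1 : s ^ ((2:ℝ)/3) ≤ L ^ ((2:ℝ)/3) :=
            Real.rpow_le_rpow hs0 h (by norm_num)
          linarith
        · have h1 : s ^ ((2:ℝ)/3) ≤ s/4 := rpow_two_thirds_le (by linarith)
          linarith
      have hYA : (13/10) * (t - L - lf L) ≤
          yW d y lf t L (2 * lf L ^ ((2:ℝ)/3)) - (Real.sqrt 2 * L - 2 * L ^ ((2:ℝ)/3)) := by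
        linarith
      have hTpos : (0:ℝ) < t - L - lf L := by linarith
      have hfrac : (13/10) * s ≤
          (yW d y lf t L (2 * lf L ^ ((2:ℝ)/3)) - (Real.sqrt 2 * L - 2 * L ^ ((2:ℝ)/3)))
            * s / (t - L - lf L) := by
        rw [le_div_iff₀ hTpos]
        calc (13/10) * s * (t - L - lf L) = ((13/10) * (t - L - lf L)) * s := by ring
          _ ≤ _ := mul_le_mul_of_nonneg_right hYA hs0
      linarith
    · linarith
  · -- Bzero bound
    simp only [Bzero]
    have hmt : (7/5:ℝ) * (s + L) ≤ mT d t / t * (s + L) :=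
      mul_le_mul_of_nonneg_right h7 (by linarith)
    have hlog0 : 0 ≤ Real.log (lf L) := Real.log_nonneg hlf1
    have hmax : 0 ≤ K * max (Real.log (min s (t - L - lf L - s))) 0 :=
      mul_nonneg hK (le_max_right _ _)
    linarith

/-- For all sufficiently large `L` and then all sufficiently large `t`, the barriers
`Q` and `B₀` are positive on `[0, t̃-ℓ]`; moreover, in the iterated limit `t → ∞`
followed by `L → ∞`, the integrals `∫_0^{t̃-ℓ} Q(s)⁻² ds` and `∫_0^{t̃-ℓ} B₀(s)⁻² ds`
tend to `0`, and consequently `exp(((α_d-α_d²)/2)·∫ Q⁻²)` and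
`exp(((α_d-α_d²)/2)·∫ B₀⁻²)` tend to `1`. -/
theorem barrier_positivity_and_girsanov_exponent_trivial
    (d : ℕ) (hd : 2 ≤ d) (y : ℝ) (lf : ℝ → ℝ)
    (hlf : ∀ L ≥ (1 : ℝ), 1 ≤ lf L ∧ lf L ≤ L ^ ((1 : ℝ) / 6))
    (hlftop : Tendsto lf atTop atTop) (K : ℝ) (hK : 0 < K) :
    (∃ L₀ : ℝ, ∀ L ≥ L₀, ∃ t₀ : ℝ, ∀ t ≥ t₀, ∀ s ∈ Icc (0 : ℝ) (t - L - lf L),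
      0 < Qbar d y lf t L s ∧ 0 < Bzero d y K lf t L s) ∧
    (∀ ε > (0 : ℝ), ∃ L₀ : ℝ, ∀ L ≥ L₀, ∃ t₀ : ℝ, ∀ t ≥ t₀,
      (∫ s in Icc (0 : ℝ) (t - L - lf L), ((Qbar d y lf t L s) ^ 2)⁻¹) ≤ ε ∧
      (∫ s in Icc (0 : ℝ) (t - L - lf L), ((Bzero d y K lf t L s) ^ 2)⁻¹) ≤ ε ∧
      |Real.exp ((alphaD d - alphaD d ^ 2) / 2 *
          ∫ s in Icc (0 : ℝ) (t - L - lf L), ((Qbar d y lf t L s) ^ 2)⁻¹) - 1| ≤ ε ∧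
      |Real.exp ((alphaD d - alphaD d ^ 2) / 2 *
          ∫ s in Icc (0 : ℝ) (t - L - lf L), ((Bzero d y K lf t L s) ^ 2)⁻¹) - 1| ≤ ε) := by
  constructor
  · -- positivity
    refine ⟨max 64 (8 * |y|), fun L hL => ?_⟩
    have hL64 : (64:ℝ) ≤ L := le_trans (le_max_left _ _) hL
    have hLy : 8 * |y| ≤ L := le_trans (le_max_right _ _) hL
    obtain ⟨h1, h6⟩ := hlf L (by linarith)
    obtain ⟨t₀, ht₀⟩ := master d y lf K hK.le L hL64 hLy h1 h6
    refine ⟨t₀, fun t ht s hs => ?_⟩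
    obtain ⟨-, hmain⟩ := ht₀ t ht
    obtain ⟨hQ, hB⟩ := hmain s hs
    have hs0 := hs.1
    exact ⟨by linarith, by linarith⟩
  · intro ε hε
    set a := (alphaD d - alphaD d ^ 2) / 2 with ha
    set m := min ε (min 1 (ε/2)) with hm
    have hmpos : 0 < m := lt_min hε (lt_min one_pos (half_pos hε))
    set δ := m / (|a| + 1) with hδ
    have haa : (0:ℝ) < |a| + 1 := by positivity
    have hδpos : 0 < δ := div_pos hmpos haa
    have hmδ : (|a| + 1) * δ = m := by
      rw [hδ]; field_simp
    have hδm : δ ≤ m := by nlinarith [abs_nonneg a]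
    have hδε : δ ≤ ε := hδm.trans (min_le_left _ _)
    refine ⟨max (max 64 (8 * |y|)) (2/δ + 1), fun L hL => ?_⟩
    have hL64 : (64:ℝ) ≤ L := le_trans ((le_max_left _ _).trans (le_max_left _ _)) hL
    have hLy : 8 * |y| ≤ L := le_trans ((le_max_right _ _).trans (le_max_left _ _)) hL
    have hLδ : 2/δ + 1 ≤ L := le_trans (le_max_right _ _) hL
    obtain ⟨h1, h6⟩ := hlf L (by linarith)
    obtain ⟨t₀, ht₀⟩ := master d y lf K hK.le L hL64 hLy h1 h6
    refine ⟨t₀, fun t ht => ?_⟩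
    obtain ⟨hTnn, hmain⟩ := ht₀ t ht
    have hc : (0:ℝ) < L/2 := by linarith
    have hIQ : (∫ s in Icc (0:ℝ) (t - L - lf L), ((Qbar d y lf t L s) ^ 2)⁻¹) ≤ 1/(L/2) :=
      integral_inv_sq_le _ _ _ hTnn hc (fun s hs => (hmain s hs).1)
    have hIB : (∫ s in Icc (0:ℝ) (t - L - lf L), ((Bzero d y K lf t L s) ^ 2)⁻¹) ≤ 1/(L/2) :=
      integral_inv_sq_le _ _ _ hTnn hc (fun s hs => (hmain s hs).2)
    have h2δ : 2 ≤ δ * L := by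
      have : 2/δ ≤ L := by linarith
      rw [div_le_iff₀ hδpos] at this
      linarith
    have hLδ' : 1/(L/2) ≤ δ := by
      rw [div_le_iff₀ (by linarith : (0:ℝ) < L/2)]
      nlinarith
    have hQδ := hIQ.trans hLδ'
    have hBδ := hIB.trans hLδ'
    have hQnn : 0 ≤ ∫ s in Icc (0:ℝ) (t - L - lf L), ((Qbar d y lf t L s) ^ 2)⁻¹ :=
      setIntegral_nonneg measurableSet_Icc (fun x _ => by positivity)
    have hBnn : 0 ≤ ∫ s in Icc (0:ℝ) (t - L - lf L), ((Bzero d y K lf t L s) ^ 2)⁻¹ :=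
      setIntegral_nonneg measurableSet_Icc (fun x _ => by positivity)
    have hexp : ∀ I : ℝ, 0 ≤ I → I ≤ δ → |Real.exp (a * I) - 1| ≤ ε := by
      intro I hI0 hIδ
      have habsI : |a * I| ≤ m := by
        rw [abs_mul, abs_of_nonneg hI0]
        calc |a| * I ≤ |a| * δ := mul_le_mul_of_nonneg_left hIδ (abs_nonneg a)
          _ ≤ (|a| + 1) * δ := by nlinarith
          _ = m := hmδ
      have hm1 : m ≤ 1 := (min_le_right _ _).trans (min_le_left _ _)
      have hmε2 : m ≤ ε/2 := (min_le_right _ _).trans (min_le_right _ _)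
      calc |Real.exp (a * I) - 1| ≤ 2 * |a * I| :=
            Real.abs_exp_sub_one_le (habsI.trans hm1)
        _ ≤ 2 * m := by linarith
        _ ≤ ε := by linarith
    exact ⟨hQδ.trans hδε, hBδ.trans hδε, hexp _ hQnn hQδ, hexp _ hBnn hBδ⟩

end
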